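/- Let f be an expanding map generating a full shift with distortion constant K. For each m, ε > 0, probability vector p̄, and each cylinder C ⊆ [0,1): liminf_{n→∞} N^s_∞(C ∩ G^{f,m}_{p̄}(n,ε)) ≥ |C|^s / K^{2s} for all 0 ≤ s < dim_H(G^{f,m}_{p̄}). -/

import Mathlib

open Set MeasureTheory Filter
open scoped ENNReal Classical

noncomputable section

/-- A similarity transformation of `ℝ`. -/
def IsSimilarity (f : ℝ → ℝ) : Prop := ∃ a b : ℝ, a ≠ 0 ∧ ∀ x, f x = a * x + b

/-- Falconer's class `𝒢^s`: Gδ sets all of whose images under countably many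
similarities intersect in a set of Hausdorff dimension at least `s`. -/
def falconerClass (s : ℝ) : Set (Set ℝ) :=
  {F | IsGδ F ∧ ∀ T : ℕ → ℝ → ℝ, (∀ i, IsSimilarity (T i)) →
    ENNReal.ofReal s ≤ dimH (⋂ i, T i '' F)}

/-- A probability vector indexed by a finite type. -/
def IsProbVector {ι : Type*} [Fintype ι] (p : ι → ℝ) : Prop :=
  (∀ i, 0 ≤ p i) ∧ ∑ i, p i = 1

/-- A dyadic half-open interval `[2^k m, 2^k (m+1))`. -/
def IsDyadic (I : Set ℝ) : Prop :=
  ∃ (k m : ℤ), I = Ico ((2:ℝ) ^ k * m) ((2:ℝ) ^ k * (m + 1))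

/-- The outer measure `M^s_∞` obtained from countable covers by dyadic intervals. -/
def dyadicMeasure (s : ℝ) (A : Set ℝ) : ℝ≥0∞ :=
  ⨅ (I : ℕ → Set ℝ) (_ : ∀ i, IsDyadic (I i)) (_ : A ⊆ ⋃ i, I i),
    ∑' i, volume (I i) ^ s

/-- Extension of a subset of `[0,1)` to `ℝ` by integer translations. -/
def periodize (A : Set ℝ) : Set ℝ := ⋃ k : ℤ, (fun x => x + (k : ℝ)) '' A

/-- An expanding interval map on `[0,1)` with `g` full monotone branches,
generating a full shift on `g` symbols. -/
structure ExpandingFullShift where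
  g : ℕ
  one_lt_g : 1 < g
  branch : Fin g → Set ℝ
  branch_Ico : ∀ i, ∃ a b : ℝ, a < b ∧ branch i = Ico a b
  branch_cover : (⋃ i, branch i) = Ico (0:ℝ) 1
  branch_disjoint : ∀ i j, i ≠ j → Disjoint (branch i) (branch j)
  f : ℝ → ℝ
  f_onto : ∀ i, f '' branch i = Ico (0:ℝ) 1
  f_mono : ∀ i, StrictMonoOn f (branch i) ∨ StrictAntiOn f (branch i)
  f_expanding : ∀ i, ∀ x ∈ branch i, ∀ y ∈ branch i, |x - y| ≤ |f x - f y|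

namespace ExpandingFullShift

variable (E : ExpandingFullShift)

/-- The symbol `0`. -/
def zeroSym : Fin E.g := ⟨0, Nat.lt_trans Nat.one_pos E.one_lt_g⟩

/-- The cylinder `C_{x₁ … x_n} ⊆ [0,1)` determined by a word `w`. -/
def cylinder (w : List (Fin E.g)) : Set ℝ :=
  {x ∈ Ico (0:ℝ) 1 | ∀ k (hk : k < w.length), E.f^[k] x ∈ E.branch (w.get ⟨k, hk⟩)}

/-- A cylinder in some interval `[k, k+1)`, `k ∈ ℤ` (periodic extension of the
cylinder structure to `ℝ`). -/
def IsCylinderZ (C : Set ℝ) : Prop :=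
  ∃ (w : List (Fin E.g)) (k : ℤ), C = (fun x => x + (k : ℝ)) '' E.cylinder w

/-- The outer measure `N^s_∞` obtained from countable covers by cylinders of `E`. -/
def cylMeasure (s : ℝ) (A : Set ℝ) : ℝ≥0∞ :=
  ⨅ (c : ℕ → List (Fin E.g)) (_ : A ⊆ ⋃ i, E.cylinder (c i)),
    ∑' i, volume (E.cylinder (c i)) ^ s

/-- The outer measure `N^s_∞` from covers by cylinders of the periodic extension. -/
def cylMeasureZ (s : ℝ) (A : Set ℝ) : ℝ≥0∞ :=
  ⨅ (c : ℕ → Set ℝ) (_ : ∀ i, E.IsCylinderZ (c i)) (_ : A ⊆ ⋃ i, c i),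
    ∑' i, volume (c i) ^ s

/-- The empirical frequency `τ^f_w(x,n)/(n-m)` of the word `w` (of length `m`)
in the first `n` symbols of the expansion of `x`. -/
def freq {m : ℕ} (w : Fin m → Fin E.g) (x : ℝ) (n : ℕ) : ℝ :=
  (((Finset.range (n - m)).filter
      (fun i => ∀ k : Fin m, E.f^[i + k] x ∈ E.branch (w k))).card : ℝ) / ((n - m : ℕ) : ℝ)

/-- `G^{f,m}_{p̄}`: the set of points whose length-`m` word frequencies converge to `p̄`. -/
def Gset (m : ℕ) (p : (Fin m → Fin E.g) → ℝ) : Set ℝ :=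
  {x ∈ Ico (0:ℝ) 1 | ∀ w : Fin m → Fin E.g,
    Tendsto (fun n => E.freq w x n) atTop (nhds (p w))}

/-- `G^{f,m}_{p̄}(n,ε)`: points whose empirical length-`m` word frequencies at time `n`
are within `ε` of `p̄` componentwise. -/
def GsetApprox (m : ℕ) (p : (Fin m → Fin E.g) → ℝ) (n : ℕ) (ε : ℝ) : Set ℝ :=
  {x ∈ Ico (0:ℝ) 1 | ∀ w : Fin m → Fin E.g, |E.freq w x n - p w| < ε}

/-- `p̄ ∈ A^{f,m}(x)`: the vector `p̄` is an accumulation point of the empirical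
frequency vectors of `x` as `n → ∞`. -/
def IsFreqAccum (m : ℕ) (p : (Fin m → Fin E.g) → ℝ) (x : ℝ) : Prop :=
  MapClusterPt p atTop (fun n => fun w => E.freq w x n)

/-- `x` is `m`-normal to `f`: every length-`m` word occurs with frequency equal to
the length of the corresponding cylinder. -/
def IsNormal (m : ℕ) (x : ℝ) : Prop :=
  ∀ w : Fin m → Fin E.g,
    Tendsto (fun n => E.freq w x n) atTop (nhds (volume (E.cylinder (List.ofFn w))).toReal)

/-- Bounded distortion with constant `K`:
`|C_u||C_v|/K ≤ |C_{uv}| ≤ K |C_u||C_v|` for all words `u, v`. -/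
def HasBoundedDistortion (K : ℝ) : Prop :=
  ∀ u v : List (Fin E.g),
    volume (E.cylinder (u ++ v)) ≤
      ENNReal.ofReal K * (volume (E.cylinder u) * volume (E.cylinder v)) ∧
    volume (E.cylinder u) * volume (E.cylinder v) ≤
      ENNReal.ofReal K * volume (E.cylinder (u ++ v))

/-- Condition (ii): for each `m` there is `p̄` with `dim_H G^{f,m}_{p̄} = 1`, and for
each word `w` of length `m` there are vectors `q̄` with `q_w ≠ p_w` whose `G`-set has
Hausdorff dimension arbitrarily close to `1`. -/
def CondII : Prop :=
  ∀ m : ℕ, 0 < m → ∃ p : (Fin m → Fin E.g) → ℝ, IsProbVector p ∧ dimH (E.Gset m p) = 1 ∧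
    ∀ w : Fin m → Fin E.g, ∀ t : ℝ≥0∞, t < 1 → ∃ q : (Fin m → Fin E.g) → ℝ,
      IsProbVector q ∧ q w ≠ p w ∧ t ≤ dimH (E.Gset m q)

end ExpandingFullShift

/-!
Suppose the liminf were smaller than `|C_w|^s / K^{2s}`. Then for infinitely many `n` the set
`C_w ∩ G(n, ε)` has a cylinder cover cheaper than `C_w` itself; such a cover consists of
subcylinders `C_{w r}`, and pushing it forward by `f^{|w|}`, which moves the word frequencies only
by `O(|w| / n)`, gives covers of `G(n, ε / 2)` of cost `S` with `K^s S < 1`. Concatenating these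
covers along the codes of points whose frequencies stay close to `p̄` yields, by bounded
distortion, covers of ever smaller cost `(K^s S)^k` and mesh, so `𝓗^s(G^{f,m}_{p̄}) = 0`,
contradicting `s < dim_H G^{f,m}_{p̄}`.
-/

open scoped Topology

theorem Set.OrdConnected.ediam_le_volume {A : Set ℝ} (hA : A.OrdConnected)
    (hb : Bornology.IsBounded A) : Metric.ediam A ≤ volume A := by
  rcases A.eq_empty_or_nonempty with rfl | hne
  · simp
  rw [Real.ediam_eq hb, ← Real.volume_Ioo]
  exact measure_mono ((IsConnected.Ioo_csInf_csSup_subset ⟨hne, hA.isPreconnected⟩)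
    hb.bddBelow hb.bddAbove)

theorem abs_add_div_add_sub_div_le {a c L D : ℝ} (ha : 0 ≤ a) (haL : a ≤ L) (hc : 0 ≤ c)
    (hcD : c ≤ D) (hD : 0 < D) : |(a + c) / (L + D) - c / D| ≤ L / D := by
  have hLD : 0 < L + D := by linarith
  have hnum : |(a + c) * D - (L + D) * c| ≤ L * (L + D) :=
    abs_le.2 ⟨by nlinarith, by nlinarith⟩
  rw [div_sub_div _ _ hLD.ne' hD.ne', abs_div, abs_of_pos (mul_pos hLD hD),
    div_le_div_iff₀ (mul_pos hLD hD) hD]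
  nlinarith

namespace ExpandingFullShift

variable (E : ExpandingFullShift)

theorem branch_subset_Ico (i : Fin E.g) : E.branch i ⊆ Ico 0 1 :=
  E.branch_cover ▸ subset_iUnion _ i

theorem mapsTo_Ico : MapsTo E.f (Ico 0 1) (Ico 0 1) := fun x hx => by
  rw [← E.branch_cover] at hx
  obtain ⟨i, hi⟩ := mem_iUnion.1 hx
  exact E.f_onto i ▸ mem_image_of_mem _ hi

theorem ordConnected_branch (i : Fin E.g) : (E.branch i).OrdConnected := by
  obtain ⟨a, b, -, h⟩ := E.branch_Ico i
  exact h ▸ ordConnected_Ico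

theorem eq_of_mem_branch {x : ℝ} {i j : Fin E.g} (hi : x ∈ E.branch i) (hj : x ∈ E.branch j) :
    i = j := by
  by_contra hij
  exact (E.branch_disjoint i j hij).ne_of_mem hi hj rfl

theorem cylinder_subset_Ico (w : List (Fin E.g)) : E.cylinder w ⊆ Ico 0 1 :=
  fun _ hx => hx.1

@[simp]
theorem cylinder_nil : E.cylinder [] = Ico 0 1 := by
  ext x; simp [cylinder]

theorem cylinder_cons (a : Fin E.g) (w : List (Fin E.g)) :
    E.cylinder (a :: w) = E.branch a ∩ E.f ⁻¹' E.cylinder w := by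
  ext x
  simp only [cylinder, mem_ofPred_eq, mem_inter_iff, mem_preimage, List.length_cons,
    Nat.forall_lt_succ_left', Function.iterate_zero_apply, Function.iterate_succ_apply,
    List.get_eq_getElem, List.getElem_cons_zero, List.getElem_cons_succ]
  constructor
  · rintro ⟨-, ha, hw⟩
    exact ⟨ha, E.mapsTo_Ico (E.branch_subset_Ico a ha), hw⟩
  · rintro ⟨ha, -, hw⟩
    exact ⟨E.branch_subset_Ico a ha, ha, hw⟩

theorem cylinder_append (u v : List (Fin E.g)) :
    E.cylinder (u ++ v) = E.cylinder u ∩ E.f^[u.length] ⁻¹' E.cylinder v := by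
  induction u with
  | nil => simpa using (inter_eq_right.2 (E.cylinder_subset_Ico v)).symm
  | cons a u ih =>
    rw [List.cons_append, cylinder_cons, ih, cylinder_cons, List.length_cons,
      Function.iterate_succ, preimage_comp]
    ext; simp [and_assoc]

theorem cylinder_anti {u w : List (Fin E.g)} (h : u <+: w) : E.cylinder w ⊆ E.cylinder u := by
  obtain ⟨v, rfl⟩ := h
  exact E.cylinder_append u v ▸ inter_subset_left

theorem prefix_or_prefix_of_mem_cylinder {x : ℝ} {u w : List (Fin E.g)}
    (hu : x ∈ E.cylinder u) (hw : x ∈ E.cylinder w) : u <+: w ∨ w <+: u := by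
  induction u generalizing x w with
  | nil => exact Or.inl List.nil_prefix
  | cons a u ih =>
    cases w with
    | nil => exact Or.inr List.nil_prefix
    | cons b w =>
      rw [cylinder_cons] at hu hw
      obtain rfl := E.eq_of_mem_branch hu.1 hw.1
      simpa only [List.cons_prefix_cons, true_and] using ih hu.2 hw.2

theorem surjOn_iterate_cylinder (w : List (Fin E.g)) :
    SurjOn E.f^[w.length] (E.cylinder w) (Ico 0 1) := by
  induction w with
  | nil => simpa using surjOn_id _
  | cons a w ih =>
    rw [cylinder_cons, List.length_cons, Function.iterate_succ]
    refine ih.comp fun y hy => ?_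
    obtain ⟨x, hx, rfl⟩ : y ∈ E.f '' E.branch a := E.f_onto a ▸ E.cylinder_subset_Ico w hy
    exact ⟨x, ⟨hx, hy⟩, rfl⟩

theorem ordConnected_cylinder (w : List (Fin E.g)) : (E.cylinder w).OrdConnected := by
  induction w with
  | nil => simpa using ordConnected_Ico
  | cons a w ih =>
    rw [cylinder_cons]
    obtain ⟨u, hu, heq⟩ := (E.f_mono a).elim (fun h => ih.preimage_monotoneOn h.monotoneOn)
      (fun h => ih.preimage_antitoneOn h.antitoneOn)
    exact heq ▸ (E.ordConnected_branch a).inter hu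

theorem ediam_cylinder_le_volume (w : List (Fin E.g)) :
    Metric.ediam (E.cylinder w) ≤ volume (E.cylinder w) :=
  (E.ordConnected_cylinder w).ediam_le_volume
    (Metric.isBounded_Ico (0 : ℝ) 1 |>.subset (E.cylinder_subset_Ico w))

theorem volume_cylinder_le_one (w : List (Fin E.g)) : volume (E.cylinder w) ≤ 1 :=
  (measure_mono (E.cylinder_subset_Ico w)).trans_eq (by simp)

def occurrences {m : ℕ} (v : Fin m → Fin E.g) (x : ℝ) (N : ℕ) : ℕ :=
  ((Finset.range N).filter fun i => ∀ k : Fin m, E.f^[i + k] x ∈ E.branch (v k)).card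

theorem occurrences_le {m : ℕ} (v : Fin m → Fin E.g) (x : ℝ) (N : ℕ) :
    E.occurrences v x N ≤ N :=
  (Finset.card_filter_le _ _).trans_eq (Finset.card_range N)

theorem occurrences_add {m : ℕ} (v : Fin m → Fin E.g) (x : ℝ) (L N : ℕ) :
    E.occurrences v x (L + N) = E.occurrences v x L + E.occurrences v (E.f^[L] x) N := by
  simp only [occurrences, Finset.card_filter, Finset.sum_range_add, ← Function.iterate_add_apply,
    add_right_comm _ _ L, add_comm _ L]

theorem freq_eq_occurrences {m : ℕ} (v : Fin m → Fin E.g) (x : ℝ) (n : ℕ) :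
    E.freq v x n = E.occurrences v x (n - m) / (n - m : ℕ) :=
  rfl

theorem abs_freq_add_sub_freq_iterate_le {m n : ℕ} (hmn : m < n) (v : Fin m → Fin E.g) (x : ℝ)
    (L : ℕ) : |E.freq v x (n + L) - E.freq v (E.f^[L] x) n| ≤ L / (n - m : ℕ) := by
  rw [freq_eq_occurrences, freq_eq_occurrences, show n + L - m = L + (n - m) by omega,
    occurrences_add]
  push_cast
  exact abs_add_div_add_sub_div_le (Nat.cast_nonneg _) (by exact_mod_cast E.occurrences_le ..)
    (Nat.cast_nonneg _) (by exact_mod_cast E.occurrences_le ..)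
    (by exact_mod_cast Nat.sub_pos_of_lt hmn)

theorem eventually_abs_freq_add_sub_freq_iterate_lt (m L : ℕ) {η : ℝ} (hη : 0 < η) :
    ∀ᶠ n in atTop, ∀ (v : Fin m → Fin E.g) (x : ℝ),
      |E.freq v x (n + L) - E.freq v (E.f^[L] x) n| < η := by
  have hlim : Tendsto (fun n : ℕ => (L : ℝ) / (n - m : ℕ)) atTop (𝓝 0) :=
    tendsto_const_nhds.div_atTop (tendsto_natCast_atTop_atTop.comp (tendsto_sub_atTop_nat m))
  filter_upwards [eventually_gt_atTop m, hlim.eventually (gt_mem_nhds hη)] with n hmn hn v x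
  exact (E.abs_freq_add_sub_freq_iterate_le hmn v x L).trans_lt hn

theorem eventually_mapsTo_iterate_GsetApprox {m : ℕ} (p : (Fin m → Fin E.g) → ℝ) (L : ℕ)
    {δ : ℝ} (hδ : 0 < δ) :
    ∀ᶠ n in atTop, MapsTo E.f^[L] (E.GsetApprox m p (n + L) (δ / 2)) (E.GsetApprox m p n δ) := by
  filter_upwards [E.eventually_abs_freq_add_sub_freq_iterate_lt m L (half_pos hδ)] with n hn x hx
  refine ⟨E.mapsTo_Ico.iterate L hx.1, fun v => ?_⟩
  have := abs_sub_le (E.freq v (E.f^[L] x) n) (E.freq v x (n + L)) (p v)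
  linarith [abs_sub_comm (E.freq v (E.f^[L] x) n) (E.freq v x (n + L)), hn v x, hx.2 v]

theorem eventually_GsetApprox_subset_image_iterate {m : ℕ} (p : (Fin m → Fin E.g) → ℝ)
    (w : List (Fin E.g)) {ε : ℝ} (hε : 0 < ε) :
    ∀ᶠ n in atTop, E.GsetApprox m p n (ε / 2) ⊆
      E.f^[w.length] '' (E.cylinder w ∩ E.GsetApprox m p (n + w.length) ε) := by
  filter_upwards [E.eventually_abs_freq_add_sub_freq_iterate_lt m w.length (half_pos hε)]
    with n hn y hy
  obtain ⟨x, hxw, rfl⟩ := E.surjOn_iterate_cylinder w hy.1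
  refine ⟨x, ⟨hxw, hxw.1, fun v => ?_⟩, rfl⟩
  have := abs_sub_le (E.freq v x (n + w.length)) (E.freq v (E.f^[w.length] x) n) (p v)
  linarith [hn v x, hy.2 v]

theorem Gset_subset_iUnion_iInter_GsetApprox {m : ℕ} (p : (Fin m → Fin E.g) → ℝ) {δ : ℝ}
    (hδ : 0 < δ) : E.Gset m p ⊆ ⋃ N, ⋂ n ≥ N, E.GsetApprox m p n δ := by
  rintro x ⟨hx, hlim⟩
  have : ∀ᶠ n in atTop, ∀ v, |E.freq v x n - p v| < δ :=
    eventually_all.2 fun v => (hlim v).eventually (Metric.ball_mem_nhds _ hδ) |>.mono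
      fun n hn => by rwa [Real.dist_eq] at hn
  obtain ⟨N, hN⟩ := eventually_atTop.1 this
  exact mem_iUnion.2 ⟨N, mem_iInter₂.2 fun n hn => ⟨hx, hN n hn⟩⟩

theorem cylMeasure_zero (A : Set ℝ) : E.cylMeasure 0 A = ∞ := by
  simp [cylMeasure]

theorem volume_cylinder_append_rpow_le {K s : ℝ} (hbd : E.HasBoundedDistortion K) (hs : 0 ≤ s)
    (u v : List (Fin E.g)) :
    volume (E.cylinder (u ++ v)) ^ s ≤
      ENNReal.ofReal K ^ s * (volume (E.cylinder u) ^ s * volume (E.cylinder v) ^ s) := by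
  rw [← ENNReal.mul_rpow_of_nonneg _ _ hs, ← ENNReal.mul_rpow_of_nonneg _ _ hs]
  exact ENNReal.rpow_le_rpow (hbd u v).1 hs

theorem volume_cylinder_rpow_mul_le {K s : ℝ} (hbd : E.HasBoundedDistortion K) (hs : 0 ≤ s)
    (u v : List (Fin E.g)) :
    volume (E.cylinder u) ^ s * volume (E.cylinder v) ^ s ≤
      ENNReal.ofReal K ^ s * volume (E.cylinder (u ++ v)) ^ s := by
  rw [← ENNReal.mul_rpow_of_nonneg _ _ hs, ← ENNReal.mul_rpow_of_nonneg _ _ hs]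
  exact ENNReal.rpow_le_rpow (hbd u v).2 hs

def HasCylinderCover (s : ℝ) (A : Set ℝ) (t : ℝ≥0∞) : Prop :=
  ∃ D : ℕ → List (Fin E.g), A ⊆ ⋃ i, E.cylinder (D i) ∧ ∑' i, volume (E.cylinder (D i)) ^ s ≤ t

/-- Cylinders are intervals, so their volume bounds their diameter: cylinder covers of cost
tending to `0` are covers of mesh tending to `0`. -/
theorem hausdorffMeasure_eq_zero_of_hasCylinderCover {s : ℝ} (hs : 0 < s) {A : Set ℝ}
    {t : ℕ → ℝ≥0∞} (ht : Tendsto t atTop (𝓝 0)) (h : ∀ k, E.HasCylinderCover s A (t k)) :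
    μH[s] A = 0 := by
  choose D hD hsum using h
  have hdiam : ∀ k i, Metric.ediam (E.cylinder (D k i)) ^ s ≤ volume (E.cylinder (D k i)) ^ s :=
    fun k i => ENNReal.rpow_le_rpow (E.ediam_cylinder_le_volume _) hs.le
  have hr : Tendsto (fun k => t k ^ s⁻¹) atTop (𝓝 0) := by
    have := ((ENNReal.continuous_rpow_const (y := s⁻¹)).tendsto 0).comp ht
    rwa [ENNReal.zero_rpow_of_pos (inv_pos.2 hs)] at this
  refine le_antisymm ?_ zero_le
  calc μH[s] A ≤ liminf (fun k => ∑' i, Metric.ediam (E.cylinder (D k i)) ^ s) atTop :=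
        Measure.hausdorffMeasure_le_liminf_tsum s A _ hr _
          (Eventually.of_forall fun k i => (ENNReal.le_rpow_inv_iff hs).2
            ((hdiam k i).trans ((ENNReal.le_tsum i).trans (hsum k))))
          (Eventually.of_forall hD)
    _ ≤ liminf t atTop :=
        liminf_le_liminf (Eventually.of_forall fun k => (ENNReal.tsum_le_tsum (hdiam k)).trans
          (hsum k))
    _ = 0 := ht.liminf_eq

section

variable {E}

theorem HasCylinderCover.mono {s : ℝ} {A B : Set ℝ} {t t' : ℝ≥0∞}
    (h : E.HasCylinderCover s A t) (hBA : B ⊆ A) (ht : t ≤ t') : E.HasCylinderCover s B t' :=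
  let ⟨D, hD, hsum⟩ := h
  ⟨D, hBA.trans hD, hsum.trans ht⟩

theorem hasCylinderCover_iUnion {s : ℝ} {A : ℕ → Set ℝ} {t : ℕ → ℝ≥0∞}
    (h : ∀ j, E.HasCylinderCover s (A j) (t j)) :
    E.HasCylinderCover s (⋃ j, A j) (∑' j, t j) := by
  choose D hD hsum using h
  refine ⟨fun i : ℕ => D i.unpair.1 i.unpair.2, iUnion_subset fun j x hx => ?_, ?_⟩
  · obtain ⟨i, hi⟩ := mem_iUnion.1 (hD j hx)
    exact mem_iUnion.2 ⟨Nat.pair j i, by simpa using hi⟩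
  · calc ∑' i : ℕ, volume (E.cylinder (D i.unpair.1 i.unpair.2)) ^ s
        = ∑' q : ℕ × ℕ, volume (E.cylinder (D q.1 q.2)) ^ s :=
          Nat.pairEquiv.symm.tsum_eq fun q => volume (E.cylinder (D q.1 q.2)) ^ s
      _ = ∑' (j) (i), volume (E.cylinder (D j i)) ^ s := ENNReal.tsum_prod'
      _ ≤ ∑' j, t j := ENNReal.tsum_le_tsum hsum

theorem hasCylinderCover_inter_cylinder_pow {s : ℝ} {A : Set ℝ} {ρ : ℝ≥0∞}
    (hR : ∀ c, E.HasCylinderCover s (A ∩ E.cylinder c) (ρ * volume (E.cylinder c) ^ s))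
    (k : ℕ) (c : List (Fin E.g)) :
    E.HasCylinderCover s (A ∩ E.cylinder c) (ρ ^ (k + 1) * volume (E.cylinder c) ^ s) := by
  induction k generalizing c with
  | zero => simpa using hR c
  | succ k ih =>
    obtain ⟨D, hD, hsum⟩ := hR c
    refine (hasCylinderCover_iUnion fun j => ih (D j)).mono (fun x hx => ?_) ?_
    · obtain ⟨j, hj⟩ := mem_iUnion.1 (hD hx)
      exact mem_iUnion.2 ⟨j, hx.1, hj⟩
    · calc ∑' j, ρ ^ (k + 1) * volume (E.cylinder (D j)) ^ s
          = ρ ^ (k + 1) * ∑' j, volume (E.cylinder (D j)) ^ s := ENNReal.tsum_mul_left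
        _ ≤ ρ ^ (k + 1) * (ρ * volume (E.cylinder c) ^ s) := by gcongr
        _ = ρ ^ (k + 1 + 1) * volume (E.cylinder c) ^ s := by ring

end

/-- `f^{|c|}` sends these points into `G(n, δ)` for all large `n`, so the cylinders `C_{c ++ D j}`
cover them, where `D` covers `G(n, δ)`. -/
theorem hasCylinderCover_iInter_GsetApprox_inter_cylinder {K : ℝ}
    (hbd : E.HasBoundedDistortion K) {m : ℕ} {p : (Fin m → Fin E.g) → ℝ} {s : ℝ} (hs : 0 ≤ s)
    {δ : ℝ} (hδ : 0 < δ) {S : ℝ≥0∞}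
    (h : ∃ᶠ n in atTop, E.HasCylinderCover s (E.GsetApprox m p n δ) S) (N : ℕ)
    (c : List (Fin E.g)) :
    E.HasCylinderCover s ((⋂ n ≥ N, E.GsetApprox m p n (δ / 2)) ∩ E.cylinder c)
      (ENNReal.ofReal K ^ s * S * volume (E.cylinder c) ^ s) := by
  obtain ⟨n, hNn, ⟨D, hD, hsum⟩, hmaps⟩ :=
    (h.and_eventually (E.eventually_mapsTo_iterate_GsetApprox p c.length hδ)).forall_exists_of_atTop
      N
  refine ⟨fun j => c ++ D j, fun x hx => ?_, ?_⟩
  · obtain ⟨j, hj⟩ := mem_iUnion.1 (hD (hmaps (mem_iInter₂.1 hx.1 _ (by omega))))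
    exact mem_iUnion.2 ⟨j, E.cylinder_append c (D j) ▸ ⟨hx.2, hj⟩⟩
  · calc ∑' j, volume (E.cylinder (c ++ D j)) ^ s
        ≤ ∑' j, ENNReal.ofReal K ^ s *
            (volume (E.cylinder c) ^ s * volume (E.cylinder (D j)) ^ s) :=
          ENNReal.tsum_le_tsum fun j => E.volume_cylinder_append_rpow_le hbd hs _ _
      _ = ENNReal.ofReal K ^ s * volume (E.cylinder c) ^ s *
            ∑' j, volume (E.cylinder (D j)) ^ s := by
          rw [ENNReal.tsum_mul_left, ENNReal.tsum_mul_left, mul_assoc]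
      _ ≤ ENNReal.ofReal K ^ s * volume (E.cylinder c) ^ s * S := by gcongr
      _ = ENNReal.ofReal K ^ s * S * volume (E.cylinder c) ^ s := by ring

theorem hausdorffMeasure_Gset_eq_zero {K : ℝ} (hbd : E.HasBoundedDistortion K) {m : ℕ}
    {p : (Fin m → Fin E.g) → ℝ} {s : ℝ} (hs : 0 < s) {δ : ℝ} (hδ : 0 < δ) {S : ℝ≥0∞}
    (hS : ENNReal.ofReal K ^ s * S < 1)
    (h : ∃ᶠ n in atTop, E.HasCylinderCover s (E.GsetApprox m p n δ) S) :
    μH[s] (E.Gset m p) = 0 := by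
  refine measure_mono_null (E.Gset_subset_iUnion_iInter_GsetApprox p (half_pos hδ))
    (measure_iUnion_null fun N => ?_)
  have hH : (⋂ n ≥ N, E.GsetApprox m p n (δ / 2)) ⊆ E.cylinder [] := fun x hx => by
    simpa using (mem_iInter₂.1 hx N le_rfl).1
  refine E.hausdorffMeasure_eq_zero_of_hasCylinderCover hs
    ((ENNReal.tendsto_pow_atTop_nhds_zero_of_lt_one hS).comp (tendsto_add_atTop_nat 1))
    fun k => ?_
  exact (hasCylinderCover_inter_cylinder_pow
    (E.hasCylinderCover_iInter_GsetApprox_inter_cylinder hbd hs.le hδ h N) k []).mono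
    (subset_inter subset_rfl hH) (by simp)

/-- A cover of part of `C_w` cheaper than `C_w` itself consists, as far as it matters, of
subcylinders `C_{w r}`; pushing them forward by `f^{|w|}` gives the cylinders `C_r`, and bounded
distortion controls the change of cost. -/
theorem hasCylinderCover_image_iterate {K : ℝ} (hbd : E.HasBoundedDistortion K) (hK : 1 ≤ K)
    {s : ℝ} (hs : 0 ≤ s) {w : List (Fin E.g)} {B : Set ℝ} {t : ℝ≥0∞}
    (ht : t ≤ volume (E.cylinder w) ^ s) (hB : E.cylMeasure s (E.cylinder w ∩ B) < t) :
    E.HasCylinderCover s (E.f^[w.length] '' (E.cylinder w ∩ B))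
      (ENNReal.ofReal K ^ s * t / volume (E.cylinder w) ^ s) := by
  obtain ⟨u, hu, hsum⟩ : ∃ u : ℕ → List (Fin E.g), E.cylinder w ∩ B ⊆ ⋃ i, E.cylinder (u i) ∧
      ∑' i, volume (E.cylinder (u i)) ^ s < t := by
    simpa only [cylMeasure, iInf_lt_iff, exists_prop] using hB
  have hw0 : volume (E.cylinder w) ^ s ≠ 0 := (zero_le.trans_lt (hB.trans_le ht)).ne'
  have hw1 : volume (E.cylinder w) ^ s ≤ 1 := ENNReal.rpow_le_one (E.volume_cylinder_le_one w) hs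
  have hprefix : ∀ i x, x ∈ E.cylinder w → x ∈ E.cylinder (u i) → w <+: u i := by
    intro i x hxw hxu
    refine (E.prefix_or_prefix_of_mem_cylinder hxu hxw).resolve_left fun hpre => ?_
    have := (ENNReal.rpow_le_rpow (measure_mono (E.cylinder_anti hpre)) hs).trans
      (ENNReal.le_tsum (f := fun i => volume (E.cylinder (u i)) ^ s) i)
    exact (this.trans_lt (hsum.trans_le ht)).false
  let v i := if w <+: u i then (u i).drop w.length else u i
  have hterm : ∀ i, volume (E.cylinder w) ^ s * volume (E.cylinder (v i)) ^ s ≤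
      ENNReal.ofReal K ^ s * volume (E.cylinder (u i)) ^ s := by
    intro i
    by_cases hpre : w <+: u i
    · obtain ⟨r, hr⟩ := hpre
      simpa [v, ← hr] using E.volume_cylinder_rpow_mul_le hbd hs w r
    · simp only [v, if_neg hpre]
      have hK1 : 1 ≤ ENNReal.ofReal K ^ s := by
        simpa using ENNReal.rpow_le_rpow (ENNReal.one_le_ofReal.2 hK) hs
      calc volume (E.cylinder w) ^ s * volume (E.cylinder (u i)) ^ s
          ≤ 1 * volume (E.cylinder (u i)) ^ s := by gcongr
        _ ≤ ENNReal.ofReal K ^ s * volume (E.cylinder (u i)) ^ s := by gcongr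
  refine ⟨v, ?_, ?_⟩
  · rintro _ ⟨x, hx, rfl⟩
    obtain ⟨i, hi⟩ := mem_iUnion.1 (hu hx)
    obtain ⟨r, hr⟩ := hprefix i x hx.1 hi
    refine mem_iUnion.2 ⟨i, ?_⟩
    rw [← hr, cylinder_append] at hi
    simpa [v, ← hr] using hi.2
  · rw [ENNReal.le_div_iff_mul_le (Or.inl hw0)
      (Or.inl (ne_top_of_le_ne_top ENNReal.one_ne_top hw1))]
    calc (∑' i, volume (E.cylinder (v i)) ^ s) * volume (E.cylinder w) ^ s
        = ∑' i, volume (E.cylinder w) ^ s * volume (E.cylinder (v i)) ^ s := by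
          rw [ENNReal.tsum_mul_left, mul_comm]
      _ ≤ ∑' i, ENNReal.ofReal K ^ s * volume (E.cylinder (u i)) ^ s := ENNReal.tsum_le_tsum hterm
      _ = ENNReal.ofReal K ^ s * ∑' i, volume (E.cylinder (u i)) ^ s := ENNReal.tsum_mul_left
      _ ≤ ENNReal.ofReal K ^ s * t := by gcongr

theorem frequently_hasCylinderCover_GsetApprox {K : ℝ} (hbd : E.HasBoundedDistortion K)
    (hK : 1 ≤ K) {m : ℕ} {p : (Fin m → Fin E.g) → ℝ} {ε : ℝ} (hε : 0 < ε) {w : List (Fin E.g)}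
    {s : ℝ} (hs : 0 ≤ s) {t : ℝ≥0∞} (ht : t ≤ volume (E.cylinder w) ^ s)
    (h : ∃ᶠ n in atTop, E.cylMeasure s (E.cylinder w ∩ E.GsetApprox m p n ε) < t) :
    ∃ᶠ n in atTop, E.HasCylinderCover s (E.GsetApprox m p n (ε / 2))
      (ENNReal.ofReal K ^ s * t / volume (E.cylinder w) ^ s) := by
  rw [← map_add_atTop_eq_nat w.length, frequently_map] at h
  exact (h.and_eventually (E.eventually_GsetApprox_subset_image_iterate p w hε)).mono
    fun n hn => (E.hasCylinderCover_image_iterate hbd hK hs ht hn.1).mono hn.2 le_rfl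

end ExpandingFullShift

open ExpandingFullShift in
theorem liminf_cylMeasure_cylinder_general (E : ExpandingFullShift) (K : ℝ) (hK : 1 ≤ K)
    (hbd : E.HasBoundedDistortion K)
    (m : ℕ) (p : (Fin m → Fin E.g) → ℝ)
    (ε : ℝ) (hε : 0 < ε) (w : List (Fin E.g))
    (s : ℝ) (hs0 : 0 ≤ s) (hs : ENNReal.ofReal s < dimH (E.Gset m p)) :
    volume (E.cylinder w) ^ s / ENNReal.ofReal (K ^ (2 * s))
      ≤ atTop.liminf (fun n => E.cylMeasure s (E.cylinder w ∩ E.GsetApprox m p n ε)) := by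
  rcases hs0.eq_or_lt with rfl | hs_pos
  · simp [cylMeasure_zero]
  set V := volume (E.cylinder w) ^ s
  set κ := ENNReal.ofReal K ^ s
  have hV : V ≠ ⊤ := ne_top_of_le_ne_top ENNReal.one_ne_top
    (ENNReal.rpow_le_one (E.volume_cylinder_le_one w) hs0)
  have hκ : ENNReal.ofReal (K ^ (2 * s)) = κ * κ := by
    rw [← ENNReal.ofReal_rpow_of_nonneg (by positivity) (by positivity), two_mul,
      ENNReal.rpow_add _ _ (ENNReal.ofReal_pos.2 (by positivity)).ne' ENNReal.ofReal_ne_top]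
  by_contra! hlt
  obtain ⟨t, hlt_t, ht⟩ := exists_between hlt
  have htV : κ * κ * t < V := by
    rwa [ENNReal.lt_div_iff_mul_lt (Or.inl (ENNReal.ofReal_pos.2 (by positivity)).ne')
      (Or.inl ENNReal.ofReal_ne_top), hκ, mul_comm] at ht
  have hκ1 : 1 ≤ κ := ENNReal.one_le_rpow (ENNReal.one_le_ofReal.2 hK) hs_pos
  have htV' : t ≤ V :=
    ((le_mul_of_one_le_left' (hκ1.trans (le_mul_of_one_le_left' hκ1))).trans_lt htV).le
  have hS : κ * (κ * t / V) < 1 := by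
    rw [← mul_div_assoc, ENNReal.div_lt_iff (Or.inl (zero_le.trans_lt htV).ne') (Or.inl hV),
      one_mul, ← mul_assoc]
    exact htV
  have hnull : μH[s] (E.Gset m p) = 0 := E.hausdorffMeasure_Gset_eq_zero hbd hs_pos (half_pos hε) hS
    (E.frequently_hasCylinderCover_GsetApprox hbd hK hε hs0 htV'
      (frequently_lt_of_liminf_lt (by isBoundedDefault) hlt_t))
  have htop := hausdorffMeasure_of_lt_dimH (d := s.toNNReal) hs
  rw [Real.coe_toNNReal s hs0, hnull] at htop
  exact ENNReal.zero_ne_top htop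

open ExpandingFullShift in
/-- for `0 ≤ s < dim_H G^{f,m}_{p̄}` and every cylinder `C ⊆ [0,1)`,
`liminf_n N^s_∞(C ∩ G^{f,m}_{p̄}(n,ε)) ≥ |C|^s / K^{2s}`. -/
theorem liminf_cylMeasure_cylinder (E : ExpandingFullShift) (K : ℝ) (hK : 1 ≤ K)
    (hbd : E.HasBoundedDistortion K)
    (m : ℕ) (hm : 0 < m) (p : (Fin m → Fin E.g) → ℝ) (hp : IsProbVector p)
    (ε : ℝ) (hε : 0 < ε) (w : List (Fin E.g))
    (s : ℝ) (hs0 : 0 ≤ s) (hs : ENNReal.ofReal s < dimH (E.Gset m p)) :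
    volume (E.cylinder w) ^ s / ENNReal.ofReal (K ^ (2 * s))
      ≤ atTop.liminf (fun n => E.cylMeasure s (E.cylinder w ∩ E.GsetApprox m p n ε)) :=
  liminf_cylMeasure_cylinder_general E K hK hbd m p ε hε w s hs0 hs
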